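/- arXiv:2409.18504 — 2 statements merged into one kernel-verified Lean document; each statement's English description precedes it below -/
import Mathlib

section
/- Let X = {x_1,...,x_N} be a dataset in R^d with N = K*c, and let X_sample = {x'_1,...,x'_K} be any multiset of K points each drawn from X. Then W_2^2(X, X_sample) >= min over partitions P of [N] into K groups of equal size c of (1/K) * sum over p in P of Var(X_p), where X and X_sample are viewed as uniform empirical measures. -/
open Finset

noncomputable def emean {d : ℕ} {ι : Type*} [Fintype ι] (s : Finset ι)
    (x : ι → EuclideanSpace ℝ (Fin d)) : EuclideanSpace ℝ (Fin d) :=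
  (s.card : ℝ)⁻¹ • ∑ i ∈ s, x i

noncomputable def evar {d : ℕ} {ι : Type*} [Fintype ι] (s : Finset ι)
    (x : ι → EuclideanSpace ℝ (Fin d)) : ℝ :=
  (s.card : ℝ)⁻¹ * ∑ i ∈ s, ‖x i - emean s x‖ ^ 2

/-- The group of index `k` in the partition encoded by `P`. -/
def grp {N K : ℕ} (P : Fin N → Fin K) (k : Fin K) : Finset (Fin N) :=
  Finset.univ.filter (fun i => P i = k)

/-- Squared Wasserstein-2 distance between the uniform empirical measures on the
points `x i, i ∈ s` and `y j, j ∈ t`, as an infimum over couplings. -/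
noncomputable def W2sq {d : ℕ} {ι κ : Type*} [Fintype ι] [Fintype κ]
    (s : Finset ι) (x : ι → EuclideanSpace ℝ (Fin d))
    (t : Finset κ) (y : κ → EuclideanSpace ℝ (Fin d)) : ℝ :=
  sInf { C | ∃ π : ι → κ → ℝ, (∀ i j, 0 ≤ π i j) ∧
    (∀ i ∈ s, ∑ j ∈ t, π i j = (s.card : ℝ)⁻¹) ∧
    (∀ j ∈ t, ∑ i ∈ s, π i j = (t.card : ℝ)⁻¹) ∧
    C = ∑ i ∈ s, ∑ j ∈ t, π i j * ‖x i - y j‖ ^ 2 }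

/-- `Q` is a selection partition from `P`: every group of `Q` contains exactly one
point of every group of `P`. -/
def Selection {N K c : ℕ} (P : Fin N → Fin K) (Q : Fin N → Fin c) : Prop :=
  ∀ j k, (Finset.univ.filter (fun i => Q i = j ∧ P i = k)).card = 1

/-!
Split every subsample point into `c` copies: a coupling `π` of the `N` data points with the `K`
subsample points becomes the doubly stochastic `N × N` matrix `K • π`, with the same transport
cost up to the factor `N`. By Birkhoff's theorem this linear cost is at least its value at
some permutation matrix, i.e. at an assignment of the data points to the subsample points with
`c` points each. The mean of a group minimises the sum of squared distances to a single point,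
so the cost of that assignment bounds the average variance of its groups.
-/

lemma evar_nonneg {d : ℕ} {ι : Type*} [Fintype ι] (s : Finset ι)
    (x : ι → EuclideanSpace ℝ (Fin d)) : 0 ≤ evar s x :=
  mul_nonneg (inv_nonneg.2 (Nat.cast_nonneg _)) (sum_nonneg fun _ _ => sq_nonneg _)

lemma sum_sub_emean {d : ℕ} {ι : Type*} [Fintype ι] (s : Finset ι)
    (x : ι → EuclideanSpace ℝ (Fin d)) : ∑ i ∈ s, (x i - emean s x) = 0 := by
  rcases s.eq_empty_or_nonempty with rfl | hs
  · exact sum_empty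
  have hcard : (#s : ℝ) ≠ 0 := Nat.cast_ne_zero.2 hs.card_pos.ne'
  rw [sum_sub_distrib, sum_const, emean, ← Nat.cast_smul_eq_nsmul ℝ, smul_smul,
    mul_inv_cancel₀ hcard, one_smul, sub_self]

lemma sum_norm_sub_emean_sq_le {d : ℕ} {ι : Type*} [Fintype ι] (s : Finset ι)
    (x : ι → EuclideanSpace ℝ (Fin d)) (b : EuclideanSpace ℝ (Fin d)) :
    ∑ i ∈ s, ‖x i - emean s x‖ ^ 2 ≤ ∑ i ∈ s, ‖x i - b‖ ^ 2 := by
  set m := emean s x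
  have hexpand : ∀ i ∈ s, ‖x i - b‖ ^ 2
      = ‖x i - m‖ ^ 2 + 2 * inner ℝ (x i - m) (m - b) + ‖m - b‖ ^ 2 := fun i _ => by
    rw [← norm_add_sq_real, sub_add_sub_cancel]
  rw [sum_congr rfl hexpand, sum_add_distrib, sum_add_distrib, ← mul_sum, ← sum_inner,
    sum_sub_emean, inner_zero_left, mul_zero, add_zero]
  exact le_add_of_nonneg_right (sum_nonneg fun _ _ => sq_nonneg _)

lemma sum_sum_norm_sub_emean_sq_le {d N K : ℕ} (P : Fin N → Fin K)
    (x : Fin N → EuclideanSpace ℝ (Fin d)) (y : Fin K → EuclideanSpace ℝ (Fin d)) :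
    ∑ k, ∑ i ∈ grp P k, ‖x i - emean (grp P k) x‖ ^ 2 ≤ ∑ i, ‖x i - y (P i)‖ ^ 2 := by
  rw [← sum_fiberwise univ P]
  refine sum_le_sum fun k _ => (sum_norm_sub_emean_sq_le _ x (y k)).trans_eq ?_
  exact sum_congr rfl fun i hi => by rw [(mem_filter.1 hi).2]

lemma bddBelow_avg_evar {d N K c : ℕ} (x : Fin N → EuclideanSpace ℝ (Fin d)) :
    BddBelow { v | ∃ P : Fin N → Fin K, (∀ k, #(grp P k) = c) ∧
      v = (K : ℝ)⁻¹ * ∑ k, evar (grp P k) x } :=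
  ⟨0, by
    rintro v ⟨P, -, rfl⟩
    exact mul_nonneg (by positivity) (sum_nonneg fun _ _ => evar_nonneg _ _)⟩

lemma avg_evar_le_of_card_grp {d N K c : ℕ} {P : Fin N → Fin K} (hP : ∀ k, #(grp P k) = c)
    (x : Fin N → EuclideanSpace ℝ (Fin d)) (y : Fin K → EuclideanSpace ℝ (Fin d)) :
    (K : ℝ)⁻¹ * ∑ k, evar (grp P k) x ≤ ((K * c : ℕ) : ℝ)⁻¹ * ∑ i, ‖x i - y (P i)‖ ^ 2 := by
  simp only [evar, hP, Nat.cast_mul, mul_inv, mul_assoc, ← mul_sum]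
  exact mul_le_mul_of_nonneg_left (mul_le_mul_of_nonneg_left
    (sum_sum_norm_sub_emean_sq_le P x y) (by positivity)) (by positivity)

lemma exists_perm_sum_le_of_mem_doublyStochastic {n : Type*} [Fintype n] [DecidableEq n]
    {M : Matrix n n ℝ} (hM : M ∈ doublyStochastic ℝ n) (C : n → n → ℝ) :
    ∃ σ : Equiv.Perm n, ∑ i, C i (σ i) ≤ ∑ i, ∑ j, M i j * C i j := by
  let cost : Matrix n n ℝ →ₗ[ℝ] ℝ :=
    { toFun := fun A => ∑ i, ∑ j, A i j * C i j
      map_add' := fun A B => by simp only [Matrix.add_apply, add_mul, sum_add_distrib]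
      map_smul' := fun a A => by
        simp only [Matrix.smul_apply, smul_eq_mul, mul_assoc, mul_sum, RingHom.id_apply] }
  rw [← SetLike.mem_coe, doublyStochastic_eq_convexHull_permMatrix] at hM
  obtain ⟨_, ⟨σ, rfl⟩, hσ⟩ :=
    (cost.concaveOn convex_univ).exists_le_of_mem_convexHull (Set.subset_univ _) hM
  refine ⟨σ, le_of_eq_of_le ?_ hσ⟩
  simp [cost, PEquiv.toMatrix_apply]

section BalancedMap

variable {ι κ : Type*} [Fintype ι] [Fintype κ] [DecidableEq κ] {g : ι → κ} {c : ℕ}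

lemma sum_comp_eq_nsmul_sum_of_card_fiber {M : Type*} [AddCommMonoid M]
    (hg : ∀ k, #{j | g j = k} = c) (f : κ → M) : ∑ j, f (g j) = c • ∑ k, f k := by
  rw [← sum_fiberwise univ g (fun j => f (g j)), smul_sum]
  refine sum_congr rfl fun k _ => ?_
  rw [sum_congr rfl fun j hj => congrArg f (mem_filter.1 hj).2, sum_const, hg]

lemma sum_sum_comp_of_card_fiber {ι' M : Type*} [Fintype ι'] [AddCommMonoid M]
    (hg : ∀ k, #{j | g j = k} = c) (F : ι' → κ → M) :
    ∑ i, ∑ j, F i (g j) = c • ∑ i, ∑ k, F i k := by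
  simp only [sum_comp_eq_nsmul_sum_of_card_fiber hg, smul_sum]

lemma card_mul_comp_mem_doublyStochastic [DecidableEq ι] (hg : ∀ k, #{j | g j = k} = c)
    {π : ι → κ → ℝ} (hπ : ∀ i k, 0 ≤ π i k)
    (hrow : ∀ i, ∑ k, π i k = (Fintype.card ι : ℝ)⁻¹)
    (hcol : ∀ k, ∑ i, π i k = (Fintype.card κ : ℝ)⁻¹) :
    Matrix.of (fun i j => (Fintype.card κ : ℝ) * π i (g j)) ∈ doublyStochastic ℝ ι := by
  have hcard : (Fintype.card κ * c : ℝ) = Fintype.card ι := by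
    simpa [mul_comm] using (sum_comp_eq_nsmul_sum_of_card_fiber hg (fun _ => (1 : ℝ))).symm
  refine mem_doublyStochastic_iff_sum.2 ⟨fun i j => mul_nonneg (Nat.cast_nonneg _) (hπ _ _),
    fun i => ?_, fun j => ?_⟩
  · have : Nonempty ι := ⟨i⟩
    simp only [Matrix.of_apply, sum_comp_eq_nsmul_sum_of_card_fiber hg, ← mul_sum, hrow,
      nsmul_eq_mul]
    rw [← mul_assoc, hcard, mul_inv_cancel₀ (Nat.cast_ne_zero.2 Fintype.card_ne_zero)]
  · have : Nonempty κ := ⟨g j⟩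
    simp only [Matrix.of_apply, ← mul_sum, hcol, ne_eq, Nat.cast_eq_zero, Fintype.card_ne_zero,
      not_false_eq_true, mul_inv_cancel₀]

end BalancedMap

lemma card_fiber_fst_finProdFinEquiv_symm {K c : ℕ} (k : Fin K) :
    #{j : Fin (K * c) | (finProdFinEquiv.symm j).1 = k} = c := by
  have : ({p : Fin K × Fin c | p.1 = k} : Finset _) = {k} ×ˢ univ := by
    ext ⟨a, b⟩
    simp [eq_comm]
  rw [card_equiv finProdFinEquiv.symm (t := {p : Fin K × Fin c | p.1 = k}) (by simp), this,
    card_product, card_singleton, card_univ, Fintype.card_fin, one_mul]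

lemma le_W2sq {d : ℕ} {ι κ : Type*} [Fintype ι] [Fintype κ] {s : Finset ι} {t : Finset κ}
    (hs : s.Nonempty) (ht : t.Nonempty) (x : ι → EuclideanSpace ℝ (Fin d))
    (y : κ → EuclideanSpace ℝ (Fin d)) {a : ℝ}
    (h : ∀ π : ι → κ → ℝ, (∀ i j, 0 ≤ π i j) → (∀ i ∈ s, ∑ j ∈ t, π i j = (#s : ℝ)⁻¹) →
      (∀ j ∈ t, ∑ i ∈ s, π i j = (#t : ℝ)⁻¹) → a ≤ ∑ i ∈ s, ∑ j ∈ t, π i j * ‖x i - y j‖ ^ 2) :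
    a ≤ W2sq s x t y := by
  have hs' : (#s : ℝ) ≠ 0 := Nat.cast_ne_zero.2 hs.card_pos.ne'
  have ht' : (#t : ℝ) ≠ 0 := Nat.cast_ne_zero.2 ht.card_pos.ne'
  refine le_csInf ⟨_, fun _ _ => (#s * #t : ℝ)⁻¹, fun _ _ => by positivity, fun _ _ => ?_,
    fun _ _ => ?_, rfl⟩ fun C ⟨π, hπ, hrow, hcol, hC⟩ => hC ▸ h π hπ hrow hcol
  · rw [sum_const, nsmul_eq_mul]; field_simp
  · rw [sum_const, nsmul_eq_mul]; field_simp

theorem subsample_wasserstein_deviation_lower_bound_general {d N K c : ℕ}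
    (hK : 0 < K) (hc : 0 < c) (hN : N = K * c)
    (x : Fin N → EuclideanSpace ℝ (Fin d)) (y : Fin K → EuclideanSpace ℝ (Fin d)) :
    sInf { v | ∃ P : Fin N → Fin K, (∀ k, (grp P k).card = c) ∧
        v = (K : ℝ)⁻¹ * ∑ k, evar (grp P k) x }
      ≤ W2sq Finset.univ x Finset.univ y := by
  subst hN
  set g : Fin (K * c) → Fin K := fun j => (finProdFinEquiv.symm j).1
  have hg : ∀ k, #{j | g j = k} = c := card_fiber_fst_finProdFinEquiv_symm
  refine le_W2sq (univ_nonempty_iff.2 ⟨⟨0, by positivity⟩⟩) (univ_nonempty_iff.2 ⟨⟨0, hK⟩⟩) x y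
    fun π hπ hrow hcol => ?_
  obtain ⟨σ, hσ⟩ := exists_perm_sum_le_of_mem_doublyStochastic
    (card_mul_comp_mem_doublyStochastic hg hπ (by simpa using hrow) (by simpa using hcol))
    fun i j => ‖x i - y (g j)‖ ^ 2
  have hP : ∀ k, #(grp (g ∘ σ) k) = c := fun k => (card_equiv σ (by simp [grp])).trans (hg k)
  calc sInf _ ≤ (K : ℝ)⁻¹ * ∑ k, evar (grp (g ∘ σ) k) x :=
        csInf_le (bddBelow_avg_evar x) ⟨_, hP, rfl⟩
    _ ≤ ((K * c : ℕ) : ℝ)⁻¹ * ∑ i, ‖x i - y (g (σ i))‖ ^ 2 := avg_evar_le_of_card_grp hP x y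
    _ ≤ ((K * c : ℕ) : ℝ)⁻¹ * ∑ i, ∑ j, (K : ℝ) * π i (g j) * ‖x i - y (g j)‖ ^ 2 :=
      mul_le_mul_of_nonneg_left (by simpa using hσ) (by positivity)
    _ = ((K * c : ℕ) : ℝ)⁻¹ * (c • ∑ i, ∑ k, (K : ℝ) * (π i k * ‖x i - y k‖ ^ 2)) := by
      simp only [mul_assoc]
      exact congrArg _
        (sum_sum_comp_of_card_fiber hg fun i k => (K : ℝ) * (π i k * ‖x i - y k‖ ^ 2))
    _ = ∑ i, ∑ j, π i j * ‖x i - y j‖ ^ 2 := by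
      simp only [← mul_sum, nsmul_eq_mul, Nat.cast_mul]
      field_simp

/-- for any multiset of `K` points drawn from the dataset `X` of `N = K*c`
points, the squared Wasserstein-2 distance between `X` and the subsample is at least the
minimal average within-group variance over balanced partitions into `K` groups of size `c`. -/
theorem subsample_wasserstein_deviation_lower_bound {d N K c : ℕ}
    (hK : 0 < K) (hc : 0 < c) (hN : N = K * c)
    (x : Fin N → EuclideanSpace ℝ (Fin d)) (y : Fin K → EuclideanSpace ℝ (Fin d))
    (hy : ∀ k, ∃ i, y k = x i) :
    sInf { v | ∃ P : Fin N → Fin K, (∀ k, (grp P k).card = c) ∧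
        v = (K : ℝ)⁻¹ * ∑ k, evar (grp P k) x }
      ≤ W2sq Finset.univ x Finset.univ y :=
  subsample_wasserstein_deviation_lower_bound_general hK hc hN x y
end

section
/- Let X = {x_1,...,x_N} in R^d with N = K*c, and let P be a partition into K equal groups of size c. For every partition Q in Q(P) (selecting one point per group of P), the variance of the multiset of subgroup means satisfies Var(E(X_Q)) <= Var(bar{X}_P), where bar{X}_P is the Wasserstein barycenter of the empirical measures {X_p : p in P} with uniform weights. Moreover, equality holds for the partition Q({T_p}) constructed from the optimal transport maps T_p from bar{X}_P to each X_p: in that case the multiset of subgroup means of Q({T_p}) equals the support of bar{X}_P, i.e., W_2(E(X_{Q({T_p})}), bar{X}_P) = 0. -/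
open Finset

/-- `b` is a (uniform-weight) Wasserstein barycenter of the empirical measures of the
groups of `Q`, among uniform empirical measures on `m` points. -/
def IsBary {d N c m : ℕ} (x : Fin N → EuclideanSpace ℝ (Fin d)) (Q : Fin N → Fin c)
    (b : Fin m → EuclideanSpace ℝ (Fin d)) : Prop :=
  ∀ b' : Fin m → EuclideanSpace ℝ (Fin d),
    ∑ j, W2sq (grp Q j) x Finset.univ b ≤ ∑ j, W2sq (grp Q j) x Finset.univ b'

/-!
For any partition `Q` with group means `m(Q)`, the parallel-axis identity gives
`∑ᵢ ‖xᵢ - y (Q i)‖² = W(Q) + ∑ⱼ |Qⱼ| ‖m(Q)ⱼ - yⱼ‖²`, with `W(Q)` the within-group sum of squares.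
A selection `Q'` couples each `X_p` with any `c` points `y` (send `xᵢ` to `y (Q' i)`), so
`∑ₚ W₂²(X_p, m(Q')) ≤ W(Q')/c`. Along the optimal maps `T_p` the barycenter costs
`(1/c) ∑ᵢ ‖xᵢ - b (Q i)‖²`, so by minimality of `b` this is at most `W(Q')/c` for every selection.
Taking `Q' = Q`, the parallel-axis identity forces `b = m(Q)`; hence `W(Q) ≤ W(Q')`, and by the law
of total variance (all groups have `K` points) the means of `Q'` spread less than those of `Q`,
i.e. than `b`.
-/

section Variance

variable {d : ℕ} {ι : Type*} [Fintype ι]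

theorem sum_sub_emean_eq_zero (s : Finset ι) (x : ι → EuclideanSpace ℝ (Fin d)) :
    ∑ i ∈ s, (x i - emean s x) = 0 := by
  rcases s.eq_empty_or_nonempty with rfl | hs
  · simp
  · have hcard : (#s : ℝ) ≠ 0 := by exact_mod_cast hs.card_pos.ne'
    rw [sum_sub_distrib, sum_const, emean, ← Nat.cast_smul_eq_nsmul ℝ, smul_smul,
      mul_inv_cancel₀ hcard, one_smul, sub_self]

theorem sum_norm_sub_sq_eq_sum_norm_sub_emean_sq_add (s : Finset ι)
    (x : ι → EuclideanSpace ℝ (Fin d)) (a : EuclideanSpace ℝ (Fin d)) :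
    ∑ i ∈ s, ‖x i - a‖ ^ 2
      = ∑ i ∈ s, ‖x i - emean s x‖ ^ 2 + #s * ‖emean s x - a‖ ^ 2 := by
  have expand : ∀ i, ‖x i - a‖ ^ 2 = ‖x i - emean s x‖ ^ 2
      + 2 * inner ℝ (x i - emean s x) (emean s x - a) + ‖emean s x - a‖ ^ 2 := fun i => by
    rw [← norm_add_sq_real, sub_add_sub_cancel]
  simp only [expand, sum_add_distrib, ← mul_sum, ← sum_inner, sum_sub_emean_eq_zero,
    inner_zero_left, mul_zero, add_zero, sum_const, nsmul_eq_mul]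

theorem evar_le_inv_card_mul_sum_norm_sub_sq (s : Finset ι)
    (x : ι → EuclideanSpace ℝ (Fin d)) (a : EuclideanSpace ℝ (Fin d)) :
    evar s x ≤ (#s : ℝ)⁻¹ * ∑ i ∈ s, ‖x i - a‖ ^ 2 := by
  rw [evar, sum_norm_sub_sq_eq_sum_norm_sub_emean_sq_add s x a]
  gcongr
  exact le_add_of_nonneg_right (by positivity)

end Variance

section Groups

variable {d N c : ℕ}

noncomputable def withinSS (x : Fin N → EuclideanSpace ℝ (Fin d)) (Q : Fin N → Fin c) : ℝ :=
  ∑ j, ∑ i ∈ grp Q j, ‖x i - emean (grp Q j) x‖ ^ 2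

theorem sum_norm_sub_comp_sq_eq_withinSS_add (x : Fin N → EuclideanSpace ℝ (Fin d))
    (Q : Fin N → Fin c) (y : Fin c → EuclideanSpace ℝ (Fin d)) :
    ∑ i, ‖x i - y (Q i)‖ ^ 2
      = withinSS x Q + ∑ j, #(grp Q j) * ‖emean (grp Q j) x - y j‖ ^ 2 := by
  have fiber : ∀ j, ∑ i ∈ grp Q j, ‖x i - y (Q i)‖ ^ 2 = ∑ i ∈ grp Q j, ‖x i - y j‖ ^ 2 :=
    fun j => sum_congr rfl fun i hi => by rw [(mem_filter.mp hi).2]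
  rw [← sum_fiberwise univ Q, withinSS, ← sum_add_distrib]
  exact sum_congr rfl fun j _ => by
    rw [← grp, fiber, sum_norm_sub_sq_eq_sum_norm_sub_emean_sq_add]

theorem sum_norm_sub_sq_eq_withinSS_add (x : Fin N → EuclideanSpace ℝ (Fin d))
    (Q : Fin N → Fin c) {K : ℕ} (hQ : ∀ j, #(grp Q j) = K) (a : EuclideanSpace ℝ (Fin d)) :
    ∑ i, ‖x i - a‖ ^ 2 = withinSS x Q + K * ∑ j, ‖emean (grp Q j) x - a‖ ^ 2 := by
  simpa [hQ, mul_sum] using sum_norm_sub_comp_sq_eq_withinSS_add x Q fun _ => a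

theorem sum_norm_sub_emean_grp_sq_eq_withinSS (x : Fin N → EuclideanSpace ℝ (Fin d))
    (Q : Fin N → Fin c) :
    ∑ i, ‖x i - emean (grp Q (Q i)) x‖ ^ 2 = withinSS x Q := by
  simpa using sum_norm_sub_comp_sq_eq_withinSS_add x Q fun j => emean (grp Q j) x

/-- Law of total variance: when all groups have `K` points, `K` times the between-group sum of
squares is the total sum of squares minus `withinSS`. -/
theorem evar_emean_grp_le_of_withinSS_le {K : ℕ} (hK : 0 < K)
    (x : Fin N → EuclideanSpace ℝ (Fin d)) {Q Q' : Fin N → Fin c}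
    (hQ : ∀ j, #(grp Q j) = K) (hQ' : ∀ j, #(grp Q' j) = K)
    (hW : withinSS x Q ≤ withinSS x Q') :
    evar univ (fun j => emean (grp Q' j) x) ≤ evar univ (fun j => emean (grp Q j) x) := by
  set a := emean univ fun j => emean (grp Q j) x
  have hK' : (0 : ℝ) < K := by exact_mod_cast hK
  have hsum : ∑ j, ‖emean (grp Q' j) x - a‖ ^ 2 ≤ ∑ j, ‖emean (grp Q j) x - a‖ ^ 2 := by
    have h := sum_norm_sub_sq_eq_withinSS_add x Q hQ a
    rw [sum_norm_sub_sq_eq_withinSS_add x Q' hQ' a] at h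
    nlinarith
  calc evar univ (fun j => emean (grp Q' j) x)
      ≤ (#(univ : Finset (Fin c)) : ℝ)⁻¹ * ∑ j, ‖emean (grp Q' j) x - a‖ ^ 2 :=
        evar_le_inv_card_mul_sum_norm_sub_sq _ _ a
    _ ≤ _ := by rw [evar]; gcongr

end Groups

section Wasserstein

variable {d : ℕ} {ι κ : Type*} [Fintype ι] [Fintype κ]

theorem W2sq_nonneg (s : Finset ι) (x : ι → EuclideanSpace ℝ (Fin d))
    (t : Finset κ) (y : κ → EuclideanSpace ℝ (Fin d)) : 0 ≤ W2sq s x t y := by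
  refine Real.sInf_nonneg ?_
  rintro C ⟨π, hπ, -, -, rfl⟩
  exact sum_nonneg fun i _ => sum_nonneg fun j _ => mul_nonneg (hπ i j) (sq_nonneg _)

theorem W2sq_le_of_coupling (s : Finset ι) (x : ι → EuclideanSpace ℝ (Fin d))
    (t : Finset κ) (y : κ → EuclideanSpace ℝ (Fin d)) (π : ι → κ → ℝ)
    (hπ : ∀ i j, 0 ≤ π i j) (hleft : ∀ i ∈ s, ∑ j ∈ t, π i j = (#s : ℝ)⁻¹)
    (hright : ∀ j ∈ t, ∑ i ∈ s, π i j = (#t : ℝ)⁻¹) :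
    W2sq s x t y ≤ ∑ i ∈ s, ∑ j ∈ t, π i j * ‖x i - y j‖ ^ 2 := by
  refine csInf_le ⟨0, ?_⟩ ⟨π, hπ, hleft, hright, rfl⟩
  rintro C ⟨π', hπ', -, -, rfl⟩
  exact sum_nonneg fun i _ => sum_nonneg fun j _ => mul_nonneg (hπ' i j) (sq_nonneg _)

theorem W2sq_comm (s : Finset ι) (x : ι → EuclideanSpace ℝ (Fin d))
    (t : Finset κ) (y : κ → EuclideanSpace ℝ (Fin d)) :
    W2sq s x t y = W2sq t y s x := by
  unfold W2sq
  congr 1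
  ext C
  constructor <;>
  · rintro ⟨π, hπ, hleft, hright, rfl⟩
    refine ⟨fun j i => π i j, fun j i => hπ i j, hright, hleft, ?_⟩
    rw [sum_comm]
    simp only [norm_sub_rev]

theorem W2sq_le_of_card_fiber_eq_one (s : Finset ι) (x : ι → EuclideanSpace ℝ (Fin d))
    (y : κ → EuclideanSpace ℝ (Fin d)) [DecidableEq κ] (f : ι → κ)
    (hf : ∀ j, #{i ∈ s | f i = j} = 1) :
    W2sq s x univ y ≤ (Fintype.card κ : ℝ)⁻¹ * ∑ i ∈ s, ‖x i - y (f i)‖ ^ 2 := by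
  have hs : #s = Fintype.card κ := by
    rw [card_eq_sum_card_fiberwise (f := f) (t := univ) fun i _ => mem_univ (f i)]
    simp [hf]
  calc W2sq s x univ y
      ≤ ∑ i ∈ s, ∑ j, (if f i = j then (Fintype.card κ : ℝ)⁻¹ else 0) * ‖x i - y j‖ ^ 2 :=
        W2sq_le_of_coupling s x univ y _ (fun i j => by positivity)
          (fun i _ => by simp [hs]) (fun j _ => by simp [sum_ite, hf])
    _ = _ := by simp [ite_mul, mul_sum]

theorem W2sq_self_eq_zero (y : κ → EuclideanSpace ℝ (Fin d)) : W2sq univ y univ y = 0 := by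
  classical
  refine le_antisymm ?_ (W2sq_nonneg _ _ _ _)
  simpa using W2sq_le_of_card_fiber_eq_one univ y y id fun j =>
    card_eq_one.mpr ⟨j, by ext; simp⟩

end Wasserstein

section Selection

variable {d N K c : ℕ} {P : Fin N → Fin K} {Q : Fin N → Fin c}

theorem Selection.card_grp (hQ : Selection P Q) (j : Fin c) : #(grp Q j) = K := by
  rw [card_eq_sum_card_fiberwise (f := P) (t := univ) fun i _ => mem_univ (P i)]
  simp [grp, filter_filter, hQ j]

theorem Selection.W2sq_grp_le (hQ : Selection P Q) (x : Fin N → EuclideanSpace ℝ (Fin d))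
    (y : Fin c → EuclideanSpace ℝ (Fin d)) (p : Fin K) :
    W2sq (grp P p) x univ y ≤ (c : ℝ)⁻¹ * ∑ i ∈ grp P p, ‖x i - y (Q i)‖ ^ 2 := by
  simpa using W2sq_le_of_card_fiber_eq_one (grp P p) x y Q fun j => by
    simpa [grp, filter_filter, and_comm] using hQ j p

theorem Selection.sum_W2sq_grp_le (hQ : Selection P Q) (x : Fin N → EuclideanSpace ℝ (Fin d))
    (y : Fin c → EuclideanSpace ℝ (Fin d)) :
    ∑ p, W2sq (grp P p) x univ y ≤ (c : ℝ)⁻¹ * ∑ i, ‖x i - y (Q i)‖ ^ 2 := by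
  rw [← sum_fiberwise univ P, mul_sum]
  exact sum_le_sum fun p _ => hQ.W2sq_grp_le x y p

theorem Selection.sum_W2sq_grp_emean_le (hQ : Selection P Q)
    (x : Fin N → EuclideanSpace ℝ (Fin d)) :
    ∑ p, W2sq (grp P p) x univ (fun j => emean (grp Q j) x) ≤ (c : ℝ)⁻¹ * withinSS x Q := by
  simpa only [sum_norm_sub_emean_grp_sq_eq_withinSS] using
    hQ.sum_W2sq_grp_le x fun j => emean (grp Q j) x

theorem bijective_uncurry_of_section (hN : N = K * c) (T : Fin K → Fin c → Fin N)
    (hTP : ∀ p j, P (T p j) = p) (hTQ : ∀ p j, Q (T p j) = j) :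
    Function.Bijective (Function.uncurry T) := by
  refine (Fintype.bijective_iff_injective_and_card _).2 ⟨?_, by simp [hN]⟩
  rintro ⟨p, j⟩ ⟨p', j'⟩ h
  simp only [Function.uncurry_apply_pair] at h
  exact Prod.ext (by rw [← hTP p j, h, hTP]) (by rw [← hTQ p j, h, hTQ])

theorem selection_of_bijective_uncurry {T : Fin K → Fin c → Fin N}
    (hT : Function.Bijective (Function.uncurry T))
    (hTP : ∀ p j, P (T p j) = p) (hTQ : ∀ p j, Q (T p j) = j) : Selection P Q := by
  intro j p
  refine card_eq_one.mpr ⟨T p j, ext fun i => ?_⟩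
  obtain ⟨⟨p', j'⟩, rfl⟩ := hT.2 i
  have hTeq := hT.1.eq_iff (a := (p', j')) (b := (p, j))
  simp_all [and_comm]

end Selection

theorem selection_mean_variance_le_barycenter_variance_general {d N K c : ℕ}
    (hK : 0 < K) (hc : 0 < c) (hN : N = K * c)
    (x : Fin N → EuclideanSpace ℝ (Fin d)) (P : Fin N → Fin K)
    (b : Fin c → EuclideanSpace ℝ (Fin d)) (hb : IsBary x P b)
    (T : Fin K → Fin c → Fin N)
    (hTmem : ∀ p j, P (T p j) = p)
    (hTopt : ∀ p, (c : ℝ)⁻¹ * ∑ j, ‖b j - x (T p j)‖ ^ 2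
      = W2sq Finset.univ b (grp P p) x)
    (Q : Fin N → Fin c) (hQT : ∀ p j, Q (T p j) = j) :
    (∀ Q' : Fin N → Fin c, Selection P Q' →
        evar Finset.univ (fun j => emean (grp Q' j) x) ≤ evar Finset.univ b) ∧
    W2sq Finset.univ (fun j => emean (grp Q j) x) Finset.univ b = 0 := by
  have hT := bijective_uncurry_of_section hN T hTmem hQT
  have hQ : Selection P Q := selection_of_bijective_uncurry hT hTmem hQT
  have hcost : ∑ p, W2sq (grp P p) x univ b = (c : ℝ)⁻¹ * ∑ i, ‖x i - b (Q i)‖ ^ 2 := by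
    rw [← hT.sum_comp, Fintype.sum_prod_type, mul_sum]
    refine sum_congr rfl fun p _ => ?_
    rw [W2sq_comm, ← hTopt p]
    simp [hQT, norm_sub_rev]
  have hopt : ∀ Q', Selection P Q' → ∑ i, ‖x i - b (Q i)‖ ^ 2 ≤ withinSS x Q' :=
    fun Q' hQ' => le_of_mul_le_mul_left (hcost ▸ (hb _).trans (hQ'.sum_W2sq_grp_emean_le x))
      (inv_pos.2 (Nat.cast_pos.2 hc))
  have hbQ : b = fun j => emean (grp Q j) x := by
    have h := hopt Q hQ
    rw [sum_norm_sub_comp_sq_eq_withinSS_add] at h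
    have h0 : ∑ j, (#(grp Q j) : ℝ) * ‖emean (grp Q j) x - b j‖ ^ 2 = 0 :=
      le_antisymm (by linarith) (by positivity)
    funext j
    simpa [hQ.card_grp, hK.ne', sub_eq_zero, eq_comm (a := (0 : ℝ)), eq_comm (a := b j)] using
      (sum_eq_zero_iff_of_nonneg fun j _ => by positivity).1 h0 j (mem_univ j)
  refine ⟨fun Q' hQ' => ?_, by rw [← hbQ]; exact W2sq_self_eq_zero b⟩
  rw [hbQ]
  refine evar_emean_grp_le_of_withinSS_le hK x hQ.card_grp hQ'.card_grp ?_
  simpa only [hbQ, sum_norm_sub_emean_grp_sq_eq_withinSS] using hopt Q' hQ'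

/-- for every selection partition `Q' ∈ Q(P)`, the variance of the multiset
of subgroup means is at most the variance of the Wasserstein barycenter `bar X_P` of the
group measures `{X_p}`; moreover, for the partition `Q` built by matching along optimal
transport maps `T_p` from `bar X_P` to each `X_p`, equality holds: the subgroup means of
`Q` coincide (in `W₂`) with the support of `bar X_P`. -/
theorem selection_mean_variance_le_barycenter_variance {d N K c : ℕ}
    (hK : 0 < K) (hc : 0 < c) (hN : N = K * c)
    (x : Fin N → EuclideanSpace ℝ (Fin d)) (P : Fin N → Fin K)
    (hPbal : ∀ k, (grp P k).card = c)
    (b : Fin c → EuclideanSpace ℝ (Fin d)) (hb : IsBary x P b)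
    (T : Fin K → Fin c → Fin N)
    (hTmem : ∀ p j, P (T p j) = p)
    (hTinj : ∀ p, Function.Injective (T p))
    (hTopt : ∀ p, (c : ℝ)⁻¹ * ∑ j, ‖b j - x (T p j)‖ ^ 2
      = W2sq Finset.univ b (grp P p) x)
    (Q : Fin N → Fin c) (hQT : ∀ p j, Q (T p j) = j) :
    (∀ Q' : Fin N → Fin c, Selection P Q' →
        evar Finset.univ (fun j => emean (grp Q' j) x) ≤ evar Finset.univ b) ∧
    W2sq Finset.univ (fun j => emean (grp Q j) x) Finset.univ b = 0 :=
  selection_mean_variance_le_barycenter_variance_general hK hc hN x P b hb T hTmem hTopt Q hQT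
end
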